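/- For every integer s ≥ 4 and every integer ℓ ≥ 0 one has P(s, 2^{s-2} + ℓ·2^{s-1}) ≥ ℓ·(2^s − 1) + 2^{s-1} + 1. -/

import Mathlib

/-- An `s × n` matrix `G` over `𝔽₂` is a `k`-PIR generator matrix if for every
index `i` there exist `k` pairwise disjoint recovery sets of column indices,
each of whose column sums equals the `i`-th standard unit vector. -/
def IsPIRMatrix (s n k : ℕ) (G : Matrix (Fin s) (Fin n) (ZMod 2)) : Prop :=
  ∀ i : Fin s, ∃ R : Fin k → Finset (Fin n),
    (∀ j j' : Fin k, j ≠ j' → Disjoint (R j) (R j')) ∧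
    ∀ j : Fin k, (∑ h ∈ R j, fun r : Fin s => G r h) = Pi.single i 1

/-- `PIRlen s k` is the smallest positive `n` for which an `s × n` `k`-PIR
generator matrix over `𝔽₂` exists. -/
noncomputable def PIRlen (s k : ℕ) : ℕ :=
  sInf {n : ℕ | 0 < n ∧ ∃ G : Matrix (Fin s) (Fin n) (ZMod 2), IsPIRMatrix s n k G}

theorem test : True := trivial

/-!
Write `N v` for the Hamming weight of the codeword `v ᵥ* G`, `S` for the number of nonzero columns
of `G` and `K = 2^(s-2)`, so that `k = K (2l + 1)`. Every recovery set of `e_i` contains a column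
`c` with `v ⬝ᵥ c = 1` as soon as `v i = 1`, hence `N v ≥ k` for `v ≠ 0`. Double counting expresses
`∑ v, N v` and `∑_{v ⬝ᵥ p = 1} N v` through `S` and the multiplicity of `p` among the columns.
If `n ≤ 2k - l`, these identities force `S = 2k - l`, a total excess `∑_{v ≠ 0} (N v - k) = K`,
and an excess over each half-space `{v ⬝ᵥ p = 1}` that is a multiple of `K`; so all of the excess
sits on a single `v₀`, and every `e_i` occurs at most `l + 1` times as a column. Weighting the
columns by 3 on `e_i`, 1 on the other `c` with `v₀ ⬝ᵥ c = 1` and 2 on the remaining nonzero `c`,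
every recovery set of `e_i` weighs at least 3, which gives `4k + K ≤ 4k + 2`, against `K ≥ 4`.
-/

open Finset Matrix

lemma zmod_two_ne_zero_iff {x : ZMod 2} : x ≠ 0 ↔ x = 1 := by
  revert x; decide

lemma AddMonoidHom.card_fiber_mul_card_of_surjective {G M : Type*} [AddGroup G] [Fintype G]
    [AddMonoid M] [Fintype M] [DecidableEq M] (f : G →+ M) (hf : Function.Surjective f) (y : M) :
    #{g | f g = y} * Fintype.card M = Fintype.card G := by
  have hsum := card_eq_sum_card_fiberwise (s := univ) (t := univ) (f := f) fun _ _ => mem_univ _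
  rw [card_univ] at hsum
  rw [hsum, ← card_univ, mul_comm, ← smul_eq_mul, ← sum_const]
  exact sum_congr rfl fun z _ =>
    AddMonoidHom.card_fiber_eq_of_mem_range f (hf y) (hf z)

section Vectors

variable {ι : Type*} {p q : ι → ZMod 2}

lemma exists_apply_eq_one_of_ne_zero (hp : p ≠ 0) : ∃ i, p i = 1 := by
  obtain ⟨i, hi⟩ := Function.ne_iff.mp hp
  exact ⟨i, zmod_two_ne_zero_iff.mp hi⟩

variable [Fintype ι] [DecidableEq ι]

lemma exists_dotProduct_eq_one_eq_zero (hp : p ≠ 0) (hpq : p ≠ q) :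
    ∃ e, e ⬝ᵥ p = 1 ∧ e ⬝ᵥ q = 0 := by
  obtain ⟨i, hi⟩ := exists_apply_eq_one_of_ne_zero hp
  obtain ⟨j, hj⟩ := Function.ne_iff.mp hpq
  have hcases : ∀ b c d : ZMod 2, c ≠ d →
      b = 0 ∨ (c = 1 ∧ d = 0) ∨ (1 + c = 1 ∧ b + d = 0) := by
    decide
  rcases hcases (q i) (p j) (q j) hj with h | ⟨h₁, h₂⟩ | ⟨h₁, h₂⟩
  · exact ⟨Pi.single i 1, by simp [hi, h]⟩
  · exact ⟨Pi.single j 1, by simp [h₁, h₂]⟩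
  · exact ⟨Pi.single i 1 + Pi.single j 1, by simp [add_dotProduct, hi, h₁, h₂]⟩

lemma card_dotProduct_eq_one_mul_two (hp : p ≠ 0) :
    #{v | v ⬝ᵥ p = 1} * 2 = 2 ^ Fintype.card ι := by
  obtain ⟨i, hi⟩ := exists_apply_eq_one_of_ne_zero hp
  let f : (ι → ZMod 2) →+ ZMod 2 :=
    AddMonoidHom.mk' (· ⬝ᵥ p) fun u v => add_dotProduct u v p
  have hf : Function.Surjective f := fun a => ⟨a • Pi.single i 1, by simp [f, hi]⟩
  simpa [f] using f.card_fiber_mul_card_of_surjective hf 1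

lemma card_dotProduct_eq_one_and_eq_one_mul_four (hp : p ≠ 0) (hq : q ≠ 0) (hpq : p ≠ q) :
    #{v | v ⬝ᵥ p = 1 ∧ v ⬝ᵥ q = 1} * 4 = 2 ^ Fintype.card ι := by
  obtain ⟨x, hxp, hxq⟩ := exists_dotProduct_eq_one_eq_zero hp hpq
  obtain ⟨y, hyq, hyp⟩ := exists_dotProduct_eq_one_eq_zero hq hpq.symm
  let f : (ι → ZMod 2) →+ ZMod 2 × ZMod 2 :=
    AddMonoidHom.mk' (fun v => (v ⬝ᵥ p, v ⬝ᵥ q)) fun u v => by simp [add_dotProduct]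
  have hf : Function.Surjective f := fun ab =>
    ⟨ab.1 • x + ab.2 • y, by simp [f, add_dotProduct, hxp, hxq, hyp, hyq]⟩
  simpa [f] using f.card_fiber_mul_card_of_surjective hf (1, 1)

lemma card_dotProduct_ne_zero_mul_two (c : ι → ZMod 2) :
    #{v | v ⬝ᵥ c ≠ 0} * 2 = 2 ^ Fintype.card ι * if c ≠ 0 then 1 else 0 := by
  by_cases hc : c = 0
  · simp [hc]
  · simpa [hc, zmod_two_ne_zero_iff] using card_dotProduct_eq_one_mul_two hc

lemma card_dotProduct_eq_one_and_ne_zero_mul_four (hp : p ≠ 0) (c : ι → ZMod 2) :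
    #{v | v ⬝ᵥ p = 1 ∧ v ⬝ᵥ c ≠ 0} * 4 =
      2 ^ Fintype.card ι * ((if c ≠ 0 then 1 else 0) + if c = p then 1 else 0) := by
  by_cases hc0 : c = 0
  · simp [hc0, Ne.symm hp]
  by_cases hcp : c = p
  · subst hcp
    rw [if_pos hc0, if_pos rfl, ← card_dotProduct_eq_one_mul_two hc0]
    simp only [zmod_two_ne_zero_iff, and_self]
    ring
  · simpa [hc0, hcp, zmod_two_ne_zero_iff] using
      card_dotProduct_eq_one_and_eq_one_mul_four hp hc0 (Ne.symm hcp)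

lemma filter_dotProduct_eq_one_subset (p : ι → ZMod 2) :
    ({v | v ⬝ᵥ p = 1} : Finset (ι → ZMod 2)) ⊆ ({v | v ≠ 0} : Finset (ι → ZMod 2)) :=
  fun v hv => mem_filter.mpr ⟨mem_univ _, by rintro rfl; simp at hv⟩

lemma exists_eq_of_dvd_sum_dotProduct_eq_one {f : (ι → ZMod 2) → ℤ} {K : ℤ} (hK : 0 < K)
    (hf : ∀ v ≠ 0, 0 ≤ f v) (htotal : ∑ v with v ≠ 0, f v = K)
    (hdvd : ∀ p ≠ 0, K ∣ ∑ v with v ⬝ᵥ p = 1, f v) : ∃ v ≠ 0, f v = K := by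
  set A : Finset (ι → ZMod 2) := {v | v ≠ 0}
  have hfA : ∀ v ∈ A, 0 ≤ f v := fun v hv => hf v (mem_filter.mp hv).2
  obtain ⟨v₀, hv₀A, hv₀_pos⟩ : ∃ v₀ ∈ A, 0 < f v₀ :=
    exists_lt_of_sum_lt (by rw [sum_const_zero, htotal]; exact hK)
  have hv₀ : v₀ ≠ 0 := (mem_filter.mp hv₀A).2
  -- The excess of a half-space through `v₀` is positive, hence all of `K`; such half-spaces
  -- separate `v₀` from every other `v`.
  have hzero : ∀ v ∈ A, v ≠ v₀ → f v = 0 := by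
    intro v hvA hv
    obtain ⟨e, he₀, he⟩ := exists_dotProduct_eq_one_eq_zero hv₀ (Ne.symm hv)
    have he_ne : e ≠ 0 := by rintro rfl; simp at he₀
    set B : Finset (ι → ZMod 2) := {u | u ⬝ᵥ e = 1}
    have hBA : B ⊆ A := filter_dotProduct_eq_one_subset e
    have hB : ∑ u ∈ B, f u = K := by
      have hpos : 0 < ∑ u ∈ B, f u := hv₀_pos.trans_le <|
        single_le_sum (fun u hu => hfA u (hBA hu)) (by simpa [B, dotProduct_comm] using he₀)
      have hle : ∑ u ∈ B, f u ≤ K :=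
        htotal ▸ sum_le_sum_of_subset_of_nonneg hBA fun u hu _ => hfA u hu
      obtain ⟨c, hc⟩ := hdvd e he_ne
      rw [hc] at hpos hle ⊢
      have hc_pos := (mul_pos_iff_of_pos_left hK).mp hpos
      have hc_le := (mul_le_iff_le_one_right hK).mp hle
      rw [show c = 1 by omega, mul_one]
    have hrest : ∑ u ∈ A \ B, f u = 0 := by
      have := sum_sdiff (f := f) hBA
      rw [hB, htotal] at this
      omega
    refine (sum_eq_zero_iff_of_nonneg fun u hu => hfA u (mem_sdiff.mp hu).1).mp hrest v ?_
    have hve : v ⬝ᵥ e = 0 := by rw [dotProduct_comm, he]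
    simp [A, B, hvA, hve]
  refine ⟨v₀, hv₀, ?_⟩
  rw [← htotal, sum_eq_single_of_mem v₀ hv₀A hzero]

end Vectors

section DoubleCounting

variable {m o : Type*} [Fintype m] [Fintype o] (G : Matrix m o (ZMod 2))

lemma sum_hammingNorm_vecMul (A : Finset (m → ZMod 2)) :
    ∑ v ∈ A, hammingNorm (v ᵥ* G) = ∑ h, #{v ∈ A | v ⬝ᵥ G.col h ≠ 0} := by
  simp only [hammingNorm, card_filter]
  exact sum_comm

variable [DecidableEq m]

lemma sum_hammingNorm_vecMul_mul_two :
    (∑ v, hammingNorm (v ᵥ* G)) * 2 = 2 ^ Fintype.card m * hammingNorm G.col := by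
  rw [sum_hammingNorm_vecMul, sum_mul, hammingNorm, card_filter, mul_sum]
  exact sum_congr rfl fun h _ => card_dotProduct_ne_zero_mul_two (G.col h)

lemma sum_hammingNorm_vecMul_filter_mul_four {p : m → ZMod 2} (hp : p ≠ 0) :
    (∑ v with v ⬝ᵥ p = 1, hammingNorm (v ᵥ* G)) * 4 =
      2 ^ Fintype.card m * (hammingNorm G.col + #{h | G.col h = p}) := by
  rw [sum_hammingNorm_vecMul, sum_mul, hammingNorm, card_filter, card_filter, ← sum_add_distrib,
    mul_sum]
  refine sum_congr rfl fun h _ => ?_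
  rw [filter_filter]
  exact card_dotProduct_eq_one_and_ne_zero_mul_four hp (G.col h)

lemma two_mul_sum_hammingNorm_vecMul_sub (k : ℤ) :
    2 * ∑ v with v ≠ 0, ((hammingNorm (v ᵥ* G) : ℤ) - k) =
      2 ^ Fintype.card m * hammingNorm G.col - 2 * (2 ^ Fintype.card m - 1) * k := by
  have hsum :
      ∑ v with v ≠ 0, (hammingNorm (v ᵥ* G) : ℤ) = ∑ v, (hammingNorm (v ᵥ* G) : ℤ) :=
    sum_filter_of_ne fun v _ hv h => hv (by simp [h])
  have hcard : (#{v : m → ZMod 2 | v ≠ 0} : ℤ) + 1 = 2 ^ Fintype.card m := by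
    rw [filter_ne']
    exact_mod_cast (card_erase_add_one (mem_univ _)).trans (by simp)
  have hN := congrArg (Nat.cast : ℕ → ℤ) (sum_hammingNorm_vecMul_mul_two G)
  push_cast at hN
  rw [sum_sub_distrib, hsum, sum_const, nsmul_eq_mul]
  linear_combination hN - 2 * k * hcard

lemma four_mul_sum_filter_hammingNorm_vecMul_sub {p : m → ZMod 2} (hp : p ≠ 0) (k : ℤ) :
    4 * ∑ v with v ⬝ᵥ p = 1, ((hammingNorm (v ᵥ* G) : ℤ) - k) =
      2 ^ Fintype.card m * (hammingNorm G.col + #{h | G.col h = p}) -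
        2 * 2 ^ Fintype.card m * k := by
  have hcard := congrArg (Nat.cast : ℕ → ℤ) (card_dotProduct_eq_one_mul_two hp)
  have hN := congrArg (Nat.cast : ℕ → ℤ) (sum_hammingNorm_vecMul_filter_mul_four G hp)
  push_cast at hcard hN
  rw [sum_sub_distrib, sum_const, nsmul_eq_mul]
  linear_combination hN - 2 * k * hcard

end DoubleCounting

section RecoveryWeight
variable {ι : Type*} [Fintype ι] {e w : ι → ZMod 2}

def recoveryWeight (e w c : ι → ZMod 2) : ℕ :=
  if c = e then 3 else if w ⬝ᵥ c ≠ 0 then 1 else if c ≠ 0 then 2 else 0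

lemma recoveryWeight_add (hw : w ⬝ᵥ e = 1) (c : ι → ZMod 2) :
    recoveryWeight e w c + (if w ⬝ᵥ c ≠ 0 then 1 else 0) =
      2 * (if c = e then 1 else 0) + 2 * (if c ≠ 0 then 1 else 0) := by
  have he : e ≠ 0 := by rintro rfl; simp at hw
  unfold recoveryWeight
  by_cases hce : c = e
  · subst hce
    simp [hw, he]
  by_cases hwc : w ⬝ᵥ c ≠ 0
  · have hc : c ≠ 0 := by rintro rfl; simp at hwc
    simp [hce, hwc, hc]
  · by_cases hc : c = 0 <;> simp [hce, hwc, hc, Ne.symm he]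

lemma odd_card_filter_dotProduct_ne_zero {α : Type*} {R : Finset α} {c : α → ι → ZMod 2}
    (hw : w ⬝ᵥ e = 1) (hR : ∑ h ∈ R, c h = e) : Odd #{h ∈ R | w ⬝ᵥ c h ≠ 0} := by
  rw [← ZMod.natCast_eq_one_iff_odd, natCast_card_filter]
  calc ∑ h ∈ R, (if w ⬝ᵥ c h ≠ 0 then 1 else 0 : ZMod 2) = ∑ h ∈ R, w ⬝ᵥ c h :=
        sum_congr rfl fun h _ => by
          generalize w ⬝ᵥ c h = x
          revert x
          decide
    _ = 1 := by rw [← dotProduct_sum, hR, hw]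

lemma three_le_sum_recoveryWeight {α : Type*} {R : Finset α} {c : α → ι → ZMod 2}
    (hw : w ⬝ᵥ e = 1) (hR : ∑ h ∈ R, c h = e) :
    3 ≤ ∑ h ∈ R, recoveryWeight e w (c h) := by
  classical
  by_cases he : ∃ h ∈ R, c h = e
  · obtain ⟨h, hh, hce⟩ := he
    calc 3 = recoveryWeight e w (c h) := by simp [recoveryWeight, hce]
      _ ≤ _ := single_le_sum (f := fun h => recoveryWeight e w (c h))
          (fun _ _ => Nat.zero_le _) hh
  push Not at he
  set T := R.filter fun h => w ⬝ᵥ c h ≠ 0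
  have hT : ∀ h ∈ T, recoveryWeight e w (c h) = 1 := fun h hh => by
    obtain ⟨hhR, hwc⟩ := mem_filter.mp hh
    simp [recoveryWeight, he h hhR, hwc]
  obtain ⟨h₀, hT₀⟩ | hT3 : (∃ h₀, T = {h₀}) ∨ 3 ≤ #T := by
    obtain ⟨j, hj⟩ : Odd #T := odd_card_filter_dotProduct_ne_zero hw hR
    rcases j.eq_zero_or_pos with rfl | _
    · exact Or.inl (card_eq_one.mp hj)
    · exact Or.inr (by omega)
  · have h₀R : h₀ ∈ R := (mem_filter.mp (hT₀.ge (mem_singleton_self h₀))).1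
    obtain ⟨h₁, h₁R, h₁₀, hc₁⟩ : ∃ h₁ ∈ R, h₁ ≠ h₀ ∧ c h₁ ≠ 0 := by
      by_contra! hcon
      exact he h₀ h₀R (by rwa [sum_eq_single_of_mem h₀ h₀R hcon] at hR)
    have hwc₁ : ¬ w ⬝ᵥ c h₁ ≠ 0 := fun hwc =>
      h₁₀ (mem_singleton.mp (hT₀ ▸ (mem_filter.mpr ⟨h₁R, hwc⟩ : h₁ ∈ T)))
    calc 3 = ∑ h ∈ {h₀, h₁}, recoveryWeight e w (c h) := by
          rw [sum_pair h₁₀.symm, hT h₀ (by simp [hT₀])]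
          simp [recoveryWeight, he h₁ h₁R, hwc₁, hc₁]
      _ ≤ _ := sum_le_sum_of_subset (insert_subset h₀R (singleton_subset_iff.mpr h₁R))
  · calc 3 ≤ #T := hT3
      _ = ∑ h ∈ T, recoveryWeight e w (c h) := by rw [sum_congr rfl hT, card_eq_sum_ones]
      _ ≤ _ := sum_le_sum_of_subset (filter_subset _ _)

end RecoveryWeight

lemma isPIRMatrix_replicate (s k : ℕ) :
    IsPIRMatrix s (s * k) k
      (Matrix.of fun r h => (Pi.single (finProdFinEquiv.symm h).1 1 : Fin s → ZMod 2) r) := by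
  intro i
  refine ⟨fun j => {finProdFinEquiv (i, j)}, fun j j' hjj' => ?_, fun j => ?_⟩
  · simpa using hjj'
  · rw [sum_singleton]
    ext r
    simp only [of_apply, Equiv.symm_apply_apply]

section PIR
variable {s n k : ℕ} {G : Matrix (Fin s) (Fin n) (ZMod 2)}

lemma le_hammingNorm_vecMul (hG : IsPIRMatrix s n k G) {v : Fin s → ZMod 2} (hv : v ≠ 0) :
    k ≤ hammingNorm (v ᵥ* G) := by
  obtain ⟨i, hi⟩ := exists_apply_eq_one_of_ne_zero hv
  obtain ⟨R, hdisj, hR⟩ := hG i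
  have hhit : ∀ j, ∃ h ∈ R j, (v ᵥ* G) h ≠ 0 := fun j => by
    refine exists_ne_zero_of_sum_ne_zero ?_
    change ∑ h ∈ R j, v ⬝ᵥ G.col h ≠ 0
    rw [← dotProduct_sum, show ∑ h ∈ R j, G.col h = Pi.single i 1 from hR j,
      dotProduct_single_one, hi]
    exact one_ne_zero
  choose f hfR hf using hhit
  simpa [hammingNorm] using card_le_card_of_injOn f (s := univ) (t := {h | (v ᵥ* G) h ≠ 0})
    (fun j _ => by simpa using hf j)
    (fun j _ j' _ hjj' => by_contra fun hne =>
      disjoint_left.mp (hdisj j j' hne) (hfR j) (hjj' ▸ hfR j'))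

lemma three_mul_add_hammingNorm_vecMul_le (hG : IsPIRMatrix s n k G) {i : Fin s}
    {w : Fin s → ZMod 2} (hw : w i = 1) :
    3 * k + hammingNorm (w ᵥ* G) ≤
      2 * #{h | G.col h = Pi.single i 1} + 2 * hammingNorm G.col := by
  obtain ⟨R, hdisj, hR⟩ := hG i
  have hwe : w ⬝ᵥ Pi.single i 1 = 1 := by rw [dotProduct_single_one, hw]
  set y := fun h => recoveryWeight (Pi.single i 1) w (G.col h)
  have htotal : ∑ h, y h + hammingNorm (w ᵥ* G) =
      2 * #{h | G.col h = Pi.single i 1} + 2 * hammingNorm G.col := by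
    simp only [hammingNorm, card_filter, mul_sum, ← sum_add_distrib]
    exact sum_congr rfl fun h _ => recoveryWeight_add hwe (G.col h)
  have hsets : 3 * k ≤ ∑ h, y h :=
    calc 3 * k = ∑ _j : Fin k, 3 := by simp [mul_comm]
      _ ≤ ∑ j, ∑ h ∈ R j, y h :=
          sum_le_sum fun j _ => three_le_sum_recoveryWeight hwe (hR j)
      _ = ∑ h ∈ univ.biUnion R, y h := (sum_biUnion fun j _ j' _ => hdisj j j').symm
      _ ≤ ∑ h, y h := sum_le_sum_of_subset (subset_univ _)
  omega

variable {K l : ℕ}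

lemma hammingNorm_col_eq_of_add_le (hK : 0 < K) (hs : 2 ^ s = 4 * K)
    (hk : k = K * (2 * l + 1)) (hG : IsPIRMatrix s n k G) (hn : n + l ≤ 2 * k) :
    (hammingNorm G.col : ℤ) = 2 * k - l := by
  have hnonneg : 0 ≤ ∑ v with v ≠ 0, ((hammingNorm (v ᵥ* G) : ℤ) - k) :=
    sum_nonneg fun v hv =>
      sub_nonneg.mpr (by exact_mod_cast le_hammingNorm_vecMul hG (mem_filter.mp hv).2)
  have hsum := two_mul_sum_hammingNorm_vecMul_sub G k
  rw [Fintype.card_fin, show (2 : ℤ) ^ s = 4 * K by exact_mod_cast hs] at hsum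
  have hSn : (hammingNorm G.col : ℤ) ≤ n := by
    exact_mod_cast hammingNorm_le_card_fintype.trans_eq (Fintype.card_fin n)
  have hk' : (k : ℤ) = K * (2 * l + 1) := by exact_mod_cast hk
  have hn' : (n : ℤ) + l ≤ 2 * k := by exact_mod_cast hn
  have : 2 * (K : ℤ) * (2 * (2 * k - hammingNorm G.col)) ≤ 2 * K * (2 * l + 1) := by linarith
  have := le_of_mul_le_mul_left this (by positivity)
  omega

theorem lt_add_of_isPIRMatrix (hK : 2 < K) (hs : 2 ^ s = 4 * K) (hk : k = K * (2 * l + 1))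
    (hG : IsPIRMatrix s n k G) : 2 * k < n + l := by
  by_contra! hn
  have hS := hammingNorm_col_eq_of_add_le (by omega) hs hk hG hn
  have hcard : (2 : ℤ) ^ Fintype.card (Fin s) = 4 * K := by
    rw [Fintype.card_fin]
    exact_mod_cast hs
  have hk' : (k : ℤ) = K * (2 * l + 1) := by exact_mod_cast hk
  have hexcess : ∀ v ≠ 0, 0 ≤ (hammingNorm (v ᵥ* G) : ℤ) - k := fun v hv =>
    sub_nonneg.mpr (by exact_mod_cast le_hammingNorm_vecMul hG hv)
  have htotal : ∑ v with v ≠ 0, ((hammingNorm (v ᵥ* G) : ℤ) - k) = K := by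
    have := two_mul_sum_hammingNorm_vecMul_sub G k
    rw [hcard, hS] at this
    linarith
  have hhalf : ∀ p ≠ 0, ∑ v with v ⬝ᵥ p = 1, ((hammingNorm (v ᵥ* G) : ℤ) - k) =
      K * (#{h | G.col h = p} - l) := fun p hp => by
    have := four_mul_sum_filter_hammingNorm_vecMul_sub G hp k
    rw [hcard, hS] at this
    linarith
  obtain ⟨v₀, hv₀, hv₀K⟩ := exists_eq_of_dvd_sum_dotProduct_eq_one (K := K) (by omega)
    hexcess htotal fun p hp => ⟨_, hhalf p hp⟩
  obtain ⟨i, hi⟩ := exists_apply_eq_one_of_ne_zero hv₀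
  have hm : (#{h | G.col h = Pi.single i 1} : ℤ) ≤ l + 1 := by
    have hle : K * ((#{h | G.col h = Pi.single i 1} : ℤ) - l) ≤ K * 1 := by
      rw [← hhalf _ (Pi.single_ne_zero_iff.mpr one_ne_zero), mul_one, ← htotal]
      exact sum_le_sum_of_subset_of_nonneg (filter_dotProduct_eq_one_subset _)
        fun v hv _ => hexcess v (mem_filter.mp hv).2
    have := le_of_mul_le_mul_left hle (by positivity)
    omega
  have hweight : (3 * k + hammingNorm (v₀ ᵥ* G) : ℤ) ≤
      2 * #{h | G.col h = Pi.single i 1} + 2 * hammingNorm G.col := by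
    exact_mod_cast three_mul_add_hammingNorm_vecMul_le hG hi
  omega

end PIR

/-- For every `s ≥ 4` and `ℓ ≥ 0`:
`P(s, 2^{s-2} + ℓ·2^{s-1}) ≥ ℓ(2^s - 1) + 2^{s-1} + 1`. -/
theorem stmt_13 (s l : ℕ) (hs : 4 ≤ s) :
    l * (2 ^ s - 1) + 2 ^ (s - 1) + 1 ≤
      PIRlen s (2 ^ (s - 2) + l * 2 ^ (s - 1)) := by
  obtain ⟨K, hK⟩ : ∃ K, 2 ^ (s - 2) = K := ⟨_, rfl⟩
  have h4K : 2 ^ s = 4 * K := by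
    rw [← hK, show (4 : ℕ) = 2 ^ 2 by rfl, ← pow_add, Nat.add_sub_cancel' (by omega)]
  have h2K : 2 ^ (s - 1) = 2 * K := by
    rw [← hK, ← pow_succ']
    congr 1
    omega
  have hK4 : 4 ≤ K := hK ▸ Nat.pow_le_pow_right two_pos (by omega : 2 ≤ s - 2)
  have hk : 2 ^ (s - 2) + l * 2 ^ (s - 1) = K * (2 * l + 1) := by
    rw [hK, h2K]
    ring
  refine le_csInf ⟨_, Nat.mul_pos (by omega) (by positivity), _, isPIRMatrix_replicate s _⟩ ?_
  rintro n ⟨-, G, hG⟩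
  have := lt_add_of_isPIRMatrix (by omega) h4K hk hG
  rw [h4K, h2K]
  zify [show 1 ≤ 4 * K by omega] at this ⊢
  linarith
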